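/- Let X be a random variable with distribution P, where P = (1/4)·P∘S₁⁻¹ + (3/4)·P∘S₂⁻¹, S₁(x) = x/4, S₂(x) = x/2 + 1/2. Then Var(X) = 16/153. -/

import Mathlib

open MeasureTheory Set Filter Topology
open scoped ENNReal Classical

noncomputable section

/-- The similarity map `S₁(x) = x/4`. -/
def S1 (x : ℝ) : ℝ := x / 4

/-- The similarity map `S₂(x) = x/2 + 1/2`. -/
def S2 (x : ℝ) : ℝ := x / 2 + 1 / 2

/-- `P` satisfies the self-similarity relation `P = (1/4)·P∘S₁⁻¹ + (3/4)·P∘S₂⁻¹`. -/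
def SelfSimilar (P : Measure ℝ) : Prop :=
  P = (1/4 : ℝ≥0∞) • P.map S1 + (3/4 : ℝ≥0∞) • P.map S2

/-- For a word `σ` over `{1,2}` (encoded as `Fin 2`, `0 ↦ S₁`, `1 ↦ S₂`),
the composition `S_σ = S_{σ₁} ∘ ⋯ ∘ S_{σ_k}`. -/
def Sw : List (Fin 2) → ℝ → ℝ
  | [] => id
  | i :: σ => (if i = 0 then S1 else S2) ∘ Sw σ

/-- `p_σ`, the product of the probabilities `p₁ = 1/4`, `p₂ = 3/4` along `σ`. -/
def pw : List (Fin 2) → ℝ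
  | [] => 1
  | i :: σ => (if i = 0 then (1:ℝ)/4 else 3/4) * pw σ

/-- `s_σ`, the product of the contraction ratios `s₁ = 1/4`, `s₂ = 1/2` along `σ`. -/
def sw : List (Fin 2) → ℝ
  | [] => 1
  | i :: σ => (if i = 0 then (1:ℝ)/4 else 1/2) * sw σ

/-- `c(σ)`, the number of occurrences of the symbol `1` (encoded `0`) in `σ`. -/
def cnt (σ : List (Fin 2)) : ℕ := σ.count 0

/-- The cylinder interval `J_σ = S_σ([0,1])`. -/
def J (σ : List (Fin 2)) : Set ℝ := Sw σ '' Set.Icc 0 1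

/-- The distortion error `V(P;α) = ∫ min_{a ∈ α} (x-a)² dP`. -/
def distortion (P : Measure ℝ) (α : Finset ℝ) : ℝ :=
  ∫ x, sInf ((fun a => (x - a) ^ 2) '' (α : Set ℝ)) ∂P

/-- The `n`-th quantization error `V_n`. -/
def qError (P : Measure ℝ) (n : ℕ) : ℝ :=
  sInf {e | ∃ α : Finset ℝ, α.Nonempty ∧ α.card ≤ n ∧ e = distortion P α}

/-- `α` is an optimal set of `n`-means for `P`. -/
def IsOptimal (P : Measure ℝ) (n : ℕ) (α : Finset ℝ) : Prop :=
  α.Nonempty ∧ α.card ≤ n ∧ distortion P α = qError P n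

/-- `q_σ := P(J_σ) · λ(J_σ)²`. -/
def qnt (P : Measure ℝ) (σ : List (Fin 2)) : ℝ :=
  (P (J σ)).toReal * ((volume (J σ)).toReal) ^ 2

lemma hS1m : Measurable S1 := by unfold S1; fun_prop
lemma hS2m : Measurable S2 := by unfold S2; fun_prop

lemma meas_eq (P : Measure ℝ) (hP : SelfSimilar P) {A : Set ℝ} (hA : MeasurableSet A) :
    P A = (1/4 : ℝ≥0∞) * P (S1 ⁻¹' A) + (3/4 : ℝ≥0∞) * P (S2 ⁻¹' A) := by
  conv_lhs => rw [hP]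
  simp [Measure.add_apply, Measure.smul_apply, Measure.map_apply hS1m hA,
    Measure.map_apply hS2m hA, smul_eq_mul]

lemma force (P : Measure ℝ) [IsProbabilityMeasure P] (hP : SelfSimilar P) {A : Set ℝ}
    (hA : MeasurableSet A) (hb : P (S1 ⁻¹' A) ≤ P A) (hc : P (S2 ⁻¹' A) ≤ P A) :
    P (S1 ⁻¹' A) = P A ∧ P (S2 ⁻¹' A) = P A := by
  have hrel := meas_eq P hP hA
  have fa : P A ≠ ⊤ := measure_ne_top _ _
  have fb : P (S1 ⁻¹' A) ≠ ⊤ := measure_ne_top _ _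
  have fc : P (S2 ⁻¹' A) ≠ ⊤ := measure_ne_top _ _
  have hrel' : (P A).toReal = (1/4) * (P (S1 ⁻¹' A)).toReal + (3/4) * (P (S2 ⁻¹' A)).toReal := by
    rw [hrel, ENNReal.toReal_add, ENNReal.toReal_mul, ENNReal.toReal_mul]
    · norm_num [ENNReal.toReal_div]
    · exact ENNReal.mul_ne_top (ENNReal.div_lt_top (by simp) (by simp)).ne fb
    · exact ENNReal.mul_ne_top (ENNReal.div_lt_top (by simp) (by simp)).ne fc
  have hb' : (P (S1 ⁻¹' A)).toReal ≤ (P A).toReal := ENNReal.toReal_mono fa hb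
  have hc' : (P (S2 ⁻¹' A)).toReal ≤ (P A).toReal := ENNReal.toReal_mono fa hc
  constructor
  · exact (ENNReal.toReal_eq_toReal_iff' fb fa).mp (by linarith)
  · exact (ENNReal.toReal_eq_toReal_iff' fc fa).mp (by linarith)

lemma preim1_Ioi (t : ℝ) : S1 ⁻¹' Ioi t = Ioi (4*t) := by
  ext x; simp only [S1, mem_preimage, mem_Ioi]; constructor <;> intro h <;> linarith

lemma preim2_Ioi (t : ℝ) : S2 ⁻¹' Ioi t = Ioi (2*t-1) := by
  ext x; simp only [S2, mem_preimage, mem_Ioi]; constructor <;> intro h <;> linarith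

lemma preim1_Iio (t : ℝ) : S1 ⁻¹' Iio t = Iio (4*t) := by
  ext x; simp only [S1, mem_preimage, mem_Iio]; constructor <;> intro h <;> linarith

lemma preim2_Iio (t : ℝ) : S2 ⁻¹' Iio t = Iio (2*t-1) := by
  ext x; simp only [S2, mem_preimage, mem_Iio]; constructor <;> intro h <;> linarith

lemma Ioi_step (P : Measure ℝ) [IsProbabilityMeasure P] (hP : SelfSimilar P) {t : ℝ}
    (ht : 1 ≤ t) : P (Ioi (4*t)) = P (Ioi t) := by
  have hb : P (S1 ⁻¹' Ioi t) ≤ P (Ioi t) := by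
    rw [preim1_Ioi]; exact measure_mono (Ioi_subset_Ioi (by linarith))
  have hc : P (S2 ⁻¹' Ioi t) ≤ P (Ioi t) := by
    rw [preim2_Ioi]; exact measure_mono (Ioi_subset_Ioi (by linarith))
  have := (force P hP measurableSet_Ioi hb hc).1
  rwa [preim1_Ioi] at this

lemma Iio_step (P : Measure ℝ) [IsProbabilityMeasure P] (hP : SelfSimilar P) {t : ℝ}
    (ht : t ≤ 0) : P (Iio (2*t-1)) = P (Iio t) := by
  have hb : P (S1 ⁻¹' Iio t) ≤ P (Iio t) := by
    rw [preim1_Iio]; exact measure_mono (Iio_subset_Iio (by linarith))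
  have hc : P (S2 ⁻¹' Iio t) ≤ P (Iio t) := by
    rw [preim2_Iio]; exact measure_mono (Iio_subset_Iio (by linarith))
  have := (force P hP measurableSet_Iio hb hc).2
  rwa [preim2_Iio] at this

lemma Ioi_one_zero (P : Measure ℝ) [IsProbabilityMeasure P] (hP : SelfSimilar P) :
    P (Ioi (1:ℝ)) = 0 := by
  have key : ∀ n : ℕ, P (Ioi ((4:ℝ)^n)) = P (Ioi 1) := by
    intro n
    induction n with
    | zero => norm_num
    | succ n ih =>
      rw [pow_succ, mul_comm ((4:ℝ)^n) 4, Ioi_step P hP (one_le_pow₀ (by norm_num)), ih]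
  have hbound : ∀ x : ℝ, P (Iic x) + P (Ioi 1) ≤ 1 := by
    intro x
    obtain ⟨n, hn⟩ := pow_unbounded_of_one_lt x (by norm_num : (1:ℝ) < 4)
    calc P (Iic x) + P (Ioi 1) = P (Iic x) + P (Ioi ((4:ℝ)^n)) := by rw [key]
    _ ≤ P (Iic ((4:ℝ)^n)) + P (Ioi ((4:ℝ)^n)) :=
        add_le_add_left (measure_mono (Iic_subset_Iic.mpr hn.le)) _
    _ = P (Iic ((4:ℝ)^n) ∪ Ioi ((4:ℝ)^n)) :=
        (measure_union (by simp [disjoint_left]) measurableSet_Ioi).symm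
    _ ≤ 1 := by rw [Iic_union_Ioi]; simp
  have htend : Tendsto (fun x : ℝ => P (Iic x) + P (Ioi 1)) atTop (𝓝 (1 + P (Ioi 1))) := by
    have := tendsto_measure_Iic_atTop P
    rw [measure_univ] at this
    exact this.add tendsto_const_nhds
  have hle : (1:ℝ≥0∞) + P (Ioi 1) ≤ 1 := le_of_tendsto' htend hbound
  nth_rewrite 2 [← add_zero (1:ℝ≥0∞)] at hle
  exact le_zero_iff.mp ((ENNReal.add_le_add_iff_left (by simp : (1:ℝ≥0∞) ≠ ⊤)).mp hle)

lemma Iio_zero_zero (P : Measure ℝ) [IsProbabilityMeasure P] (hP : SelfSimilar P) :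
    P (Iio (0:ℝ)) = 0 := by
  have key : ∀ n : ℕ, P (Iio (1 - (2:ℝ)^n)) = P (Iio 0) := by
    intro n
    induction n with
    | zero => norm_num
    | succ n ih =>
      have h : 2*(1 - (2:ℝ)^n) - 1 = 1 - 2^(n+1) := by ring
      rw [← h, Iio_step P hP (by nlinarith [one_le_pow₀ (by norm_num : (1:ℝ) ≤ 2) (n := n)]), ih]
  have hbound : ∀ x : ℝ, P (Ici x) + P (Iio 0) ≤ 1 := by
    intro x
    obtain ⟨n, hn⟩ := pow_unbounded_of_one_lt (1 - x) (by norm_num : (1:ℝ) < 2)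
    calc P (Ici x) + P (Iio 0) = P (Ici x) + P (Iio (1 - (2:ℝ)^n)) := by rw [key]
    _ ≤ P (Ici x) + P (Iio x) :=
        add_le_add_right (measure_mono (Iio_subset_Iio (by linarith))) _
    _ = P (Ici x ∪ Iio x) :=
        (measure_union (by simp [disjoint_left]) measurableSet_Iio).symm
    _ ≤ 1 := by rw [union_comm, Iio_union_Ici]; simp
  have htend : Tendsto (fun x : ℝ => P (Ici x) + P (Iio 0)) atBot (𝓝 (1 + P (Iio 0))) := by
    have := tendsto_measure_Ici_atBot P
    rw [measure_univ] at this
    exact this.add tendsto_const_nhds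
  have hle : (1:ℝ≥0∞) + P (Iio 0) ≤ 1 := le_of_tendsto' htend hbound
  nth_rewrite 2 [← add_zero (1:ℝ≥0∞)] at hle
  exact le_zero_iff.mp ((ENNReal.add_le_add_iff_left (by simp : (1:ℝ≥0∞) ≠ ⊤)).mp hle)

lemma ae_mem_Icc (P : Measure ℝ) [IsProbabilityMeasure P] (hP : SelfSimilar P) :
    ∀ᵐ x ∂P, x ∈ Icc (0:ℝ) 1 := by
  have h : P (Icc (0:ℝ) 1)ᶜ = 0 := by
    have hc : (Icc (0:ℝ) 1)ᶜ = Iio 0 ∪ Ioi 1 := by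
      ext x
      simp only [mem_compl_iff, mem_Icc, mem_union, mem_Iio, mem_Ioi, not_and_or, not_le]
    rw [hc]
    exact measure_union_null (Iio_zero_zero P hP) (Ioi_one_zero P hP)
  rw [ae_iff]
  convert h using 2
  rfl

lemma integral_decomp (P : Measure ℝ) [IsProbabilityMeasure P] (hP : SelfSimilar P)
    (f : ℝ → ℝ) (hf : Measurable f)
    (hf1 : Integrable (fun x => f (S1 x)) P) (hf2 : Integrable (fun x => f (S2 x)) P) :
    ∫ x, f x ∂P = (1/4) * ∫ x, f (S1 x) ∂P + (3/4) * ∫ x, f (S2 x) ∂P := by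
  have hi1 : Integrable f (P.map S1) :=
    (integrable_map_measure hf.aestronglyMeasurable hS1m.aemeasurable).mpr hf1
  have hi2 : Integrable f (P.map S2) :=
    (integrable_map_measure hf.aestronglyMeasurable hS2m.aemeasurable).mpr hf2
  have hne : ((1:ℝ≥0∞)/4) ≠ ⊤ := (ENNReal.div_lt_top (by simp) (by simp)).ne
  have hne' : ((3:ℝ≥0∞)/4) ≠ ⊤ := (ENNReal.div_lt_top (by simp) (by simp)).ne
  conv_lhs => rw [hP]
  rw [integral_add_measure (hi1.smul_measure hne) (hi2.smul_measure hne'),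
    integral_smul_measure, integral_smul_measure,
    integral_map hS1m.aemeasurable hf.aestronglyMeasurable,
    integral_map hS2m.aemeasurable hf.aestronglyMeasurable]
  norm_num [ENNReal.toReal_div, smul_eq_mul]

theorem stmt_4 (P : Measure ℝ) [IsProbabilityMeasure P] (hP : SelfSimilar P) :
    (∫ x, x ^ 2 ∂P) - (∫ x, x ∂P) ^ 2 = 16 / 153 := by
  have hsupp := ae_mem_Icc P hP
  have hX : Integrable (fun x : ℝ => x) P := by
    apply Integrable.mono' (integrable_const (1:ℝ)) measurable_id.aestronglyMeasurable
    filter_upwards [hsupp] with x hx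
    simp only [id_eq, Real.norm_eq_abs, abs_le]
    exact ⟨by linarith [hx.1], hx.2⟩
  have hX2 : Integrable (fun x : ℝ => x ^ 2) P := by
    apply Integrable.mono' (integrable_const (1:ℝ))
      (measurable_id.pow_const 2).aestronglyMeasurable
    filter_upwards [hsupp] with x hx
    simp only [id_eq, Real.norm_eq_abs, abs_le]
    constructor <;> nlinarith [hx.1, hx.2]
  set I1 := ∫ x, x ∂P with hI1d
  set I2 := ∫ x, x ^ 2 ∂P with hI2d
  have hIc : Integrable (fun x : ℝ => x / 2 + 1 / 2) P :=
    (hX.div_const 2).add (integrable_const _)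
  -- first moment equation
  have e1 : I1 = (1/4) * (I1/4) + (3/4) * (I1/2 + 1/2) := by
    have h := integral_decomp P hP (fun x => x) measurable_id
      (by simpa [S1] using hX.div_const 4) (by simpa [S2] using hIc)
    simp only [S1, S2] at h
    rw [integral_div, integral_add (hX.div_const 2) (integrable_const _),
      integral_div, integral_const] at h
    simpa using h
  -- second moment equation
  have e2 : I2 = (1/4) * (I2/16) + (3/4) * (I2/4 + I1/2 + 1/4) := by
    have hc1 : Integrable (fun x : ℝ => (x / 4) ^ 2) P := by
      have : (fun x : ℝ => (x / 4) ^ 2) = fun x => x ^ 2 / 16 := by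
        funext x; ring
      rw [this]; exact hX2.div_const 16
    have hc2 : Integrable (fun x : ℝ => (x / 2 + 1 / 2) ^ 2) P := by
      have : (fun x : ℝ => (x / 2 + 1 / 2) ^ 2) = fun x => x ^ 2 / 4 + x / 2 + 1/4 := by
        funext x; ring
      rw [this]
      exact ((hX2.div_const 4).add (hX.div_const 2)).add (integrable_const _)
    have h := integral_decomp P hP (fun x => x ^ 2) (measurable_id.pow_const 2)
      (by simpa [S1] using hc1) (by simpa [S2] using hc2)
    simp only [S1, S2] at h
    have r1 : ∫ x : ℝ, (x / 4) ^ 2 ∂P = I2 / 16 := by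
      have : (fun x : ℝ => (x / 4) ^ 2) = fun x => x ^ 2 / 16 := by
        funext x; ring
      rw [this, integral_div]
    have r2 : ∫ x : ℝ, (x / 2 + 1 / 2) ^ 2 ∂P = I2 / 4 + I1 / 2 + 1 / 4 := by
      have : (fun x : ℝ => (x / 2 + 1 / 2) ^ 2) = fun x => (x ^ 2 / 4 + x / 2) + 1/4 := by
        funext x; ring
      have ha : Integrable (fun x : ℝ => x ^ 2 / 4 + x / 2) P :=
        (hX2.div_const 4).add (hX.div_const 2)
      rw [this, integral_add ha (integrable_const _),
        integral_add (hX2.div_const 4) (hX.div_const 2), integral_div, integral_div,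
        integral_const]
      simp [add_assoc]
      rw [← hI1d, ← hI2d]
    rw [r1, r2] at h
    exact h
  have hI1 : I1 = 2/3 := by linarith
  have hI2 : I2 = 28/51 := by linarith
  rw [hI1, hI2]
  norm_num
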